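/- Let G be a finite group generated by a subset Σ ⊆ G, let Δ ⊆ G, and let k ≥ 1 be an integer with 2^k ≥ |ncl_G(Δ)| / |⟨Δ⟩|. Then there exists a subset Ξ ⊆ {h⁻¹·g·h : g ∈ Δ, h ∈ Σ^{≤k}} with |Ξ| ≤ k such that ncl_G(Δ) = ⟨Δ ∪ Ξ⟩. -/

import Mathlib

/-- Product of a nonempty list of semigroup elements (head times the rest). -/
def listProd₁ {S : Type*} [Semigroup S] : S → List S → S
  | a, [] => a
  | a, b :: l => listProd₁ (a * b) l

/-- `Σ^{≤k}`: elements expressible as a nonempty product of at most `k` elements of `Sig`. -/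
def ProdLE {S : Type*} [Semigroup S] (Sig : Set S) (k : ℕ) : Set S :=
  { t | ∃ (a : S) (L : List S),
      a ∈ Sig ∧ (∀ x ∈ L, x ∈ Sig) ∧ L.length + 1 ≤ k ∧ listProd₁ a L = t }

/-- `S^k`: the set of all products of exactly `k` elements of `S`. -/
def powSet (S : Type*) [Semigroup S] (k : ℕ) : Set S :=
  { t | ∃ (a : S) (L : List S), L.length + 1 = k ∧ listProd₁ a L = t }

set_option linter.unusedSectionVars false

lemma listProd₁_append {S : Type*} [Semigroup S] (a s : S) (L : List S) :
    listProd₁ a (L ++ [s]) = listProd₁ a L * s := by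
  induction L generalizing a with
  | nil => rfl
  | cons b l ih => simp [listProd₁, ih]

lemma prodLE_mono {S : Type*} [Semigroup S] {Sig : Set S} {j k : ℕ} (h : j ≤ k) :
    ProdLE Sig j ⊆ ProdLE Sig k := by
  rintro t ⟨a, L, ha, hL, hlen, rfl⟩
  exact ⟨a, L, ha, hL, hlen.trans h, rfl⟩

lemma mem_prodLE_one {S : Type*} [Semigroup S] {Sig : Set S} {s : S} (hs : s ∈ Sig) :
    s ∈ ProdLE Sig 1 :=
  ⟨s, [], hs, by simp, le_refl 1, rfl⟩

lemma prodLE_mul_mem {S : Type*} [Semigroup S] {Sig : Set S} {j : ℕ} {h s : S}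
    (hh : h ∈ ProdLE Sig j) (hs : s ∈ Sig) : h * s ∈ ProdLE Sig (j + 1) := by
  obtain ⟨a, L, ha, hL, hlen, rfl⟩ := hh
  refine ⟨a, L ++ [s], ha, ?_, by simpa using Nat.add_le_add_right hlen 1,
    listProd₁_append a s L⟩
  intro x hx
  rcases List.mem_append.mp hx with h1 | h2
  · exact hL x h1
  · simpa using (List.mem_singleton.mp h2) ▸ hs

lemma two_mul_le_of_dvd_lt {d n : ℕ} (hdvd : d ∣ n) (hlt : d < n) : 2 * d ≤ n := by
  obtain ⟨m, rfl⟩ := hdvd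
  rcases Nat.lt_or_ge m 2 with hm | hm
  · interval_cases m <;> omega
  · calc 2 * d = d * 2 := by ring
      _ ≤ d * m := Nat.mul_le_mul_left d hm

lemma two_mul_card_le {G : Type*} [Group G] [Fintype G] {H K : Subgroup G} (hle : H ≤ K)
    (hne : H ≠ K) : 2 * Nat.card H ≤ Nat.card K := by
  refine two_mul_le_of_dvd_lt (Subgroup.card_dvd_of_le hle) ?_
  refine lt_of_le_of_ne (Subgroup.card_le_of_le hle) (fun h => hne ?_)
  exact Subgroup.eq_of_le_of_card_ge hle h.ge

section Core

variable {G : Type*} [Group G] [Fintype G] (Sig Δ : Set G)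

/-- conjugates of `Δ` by products of at most `j` generators -/
def conjSet (j : ℕ) : Set G := { x | ∃ g ∈ Δ, ∃ h ∈ ProdLE Sig j, x = h⁻¹ * g * h }

/-- chain of subgroups -/
def KK (j : ℕ) : Subgroup G := Subgroup.closure (Δ ∪ conjSet Sig Δ j)

lemma KK_le_N (j : ℕ) : KK Sig Δ j ≤ Subgroup.normalClosure Δ := by
  apply (Subgroup.closure_le _).mpr
  rintro x (hx | ⟨g, hg, h, _, rfl⟩)
  · exact Subgroup.subset_normalClosure hx
  · have := (Subgroup.normalClosure_normal (s := Δ)).conj_mem g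
      (Subgroup.subset_normalClosure hg) h⁻¹
    simpa using this

lemma KK_mono {j l : ℕ} (h : j ≤ l) : KK Sig Δ j ≤ KK Sig Δ l := by
  apply Subgroup.closure_mono
  apply Set.union_subset_union_right
  rintro x ⟨g, hg, hh, hmem, rfl⟩
  exact ⟨g, hg, hh, prodLE_mono h hmem, rfl⟩

lemma closureΔ_le_KK (j : ℕ) : Subgroup.closure Δ ≤ KK Sig Δ j :=
  Subgroup.closure_mono Set.subset_union_left

/-- If the chain stabilizes at step j, then `KK j` is normal. -/
lemma KK_normal (hgen : Subgroup.closure Sig = ⊤) {j : ℕ}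
    (hstab : KK Sig Δ j = KK Sig Δ (j + 1)) : (KK Sig Δ j).Normal := by
  set H := KK Sig Δ j with hH
  have key : ∀ s ∈ Sig, ∀ x ∈ H, s⁻¹ * x * s ∈ H := by
    intro s hs
    have hle : KK Sig Δ j ≤ (KK Sig Δ (j + 1)).comap (MulAut.conj s⁻¹).toMonoidHom := by
      apply (Subgroup.closure_le _).mpr
      intro x hx
      rw [SetLike.mem_coe, Subgroup.mem_comap]
      simp only [MulEquiv.coe_toMonoidHom, MulAut.conj_apply, inv_inv]
      rcases hx with hx | ⟨g, hg, h, hmem, rfl⟩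
      · exact Subgroup.subset_closure (Or.inr ⟨x, hx, s,
          prodLE_mono (Nat.one_le_iff_ne_zero.mpr (Nat.succ_ne_zero j)) (mem_prodLE_one hs), rfl⟩)
      · exact Subgroup.subset_closure (Or.inr ⟨g, hg, h * s, prodLE_mul_mem hmem hs, by group⟩)
    intro x hx
    have := hle hx
    rw [Subgroup.mem_comap] at this
    simp only [MulEquiv.coe_toMonoidHom, MulAut.conj_apply, inv_inv] at this
    rwa [hstab]
  -- T: elements g with g⁻¹ H g ⊆ H, a subgroup by finiteness
  let T : Subgroup G :=
    { carrier := { g | ∀ x ∈ H, g⁻¹ * x * g ∈ H }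
      one_mem' := by intro x hx; simpa using hx
      mul_mem' := by
        intro a b ha hb x hx
        have := hb _ (ha x hx)
        have e : b⁻¹ * (a⁻¹ * x * a) * b = (a * b)⁻¹ * x * (a * b) := by group
        rwa [e] at this
      inv_mem' := by
        intro g hg x hx
        -- conjugation by g maps H into H injectively, hence surjectively
        have hinj : Function.Injective (fun y : H => (⟨g⁻¹ * y * g, hg y y.2⟩ : H)) := by
          intro y z hyz
          have := congrArg (Subtype.val) hyz
          simp only at this
          ext
          exact mul_left_cancel (mul_right_cancel this)
        have hsurj := Finite.surjective_of_injective hinj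
        obtain ⟨y, hy⟩ := hsurj ⟨x, hx⟩
        have : g⁻¹ * y * g = x := congrArg Subtype.val hy
        have e : (y : G) = g * x * g⁻¹ := by rw [← this]; group
        have := y.2
        rw [e] at this
        simpa [mul_assoc] using this }
  have hT : T = ⊤ := by
    rw [← hgen]
    apply le_antisymm ?_ ((Subgroup.closure_le T).mpr key)
    rw [hgen]; exact le_top
  constructor
  intro n hn g
  have hg : g⁻¹ ∈ T := by rw [hT]; trivial
  have := hg n hn
  simpa using this

/-- If the chain stabilizes, it equals the normal closure. -/
lemma KK_eq_N_of_stab (hgen : Subgroup.closure Sig = ⊤) {j : ℕ}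
    (hstab : KK Sig Δ j = KK Sig Δ (j + 1)) :
    KK Sig Δ j = Subgroup.normalClosure Δ := by
  have := KK_normal Sig Δ hgen hstab
  apply le_antisymm (KK_le_N Sig Δ j)
  exact Subgroup.normalClosure_le_normal
    (fun x hx => Subgroup.subset_closure (Or.inl hx))

end Core

/-- the normal closure of `Δ` is generated by `Δ` together with at most
`k` conjugates of elements of `Δ` by products of at most `k` generators. -/
theorem normal_closure_generated_by_few_conjugates
    (G : Type*) [Group G] [Fintype G] (Sig : Set G)
    (hgen : Subgroup.closure Sig = ⊤) (Δ : Set G) (k : ℕ) (hk : 1 ≤ k)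
    (hcard : Nat.card (Subgroup.normalClosure Δ) / Nat.card (Subgroup.closure Δ) ≤ 2 ^ k) :
    ∃ Ξ : Set G, Ξ ⊆ { x | ∃ g ∈ Δ, ∃ h ∈ ProdLE Sig k, x = h⁻¹ * g * h } ∧
      Ξ.ncard ≤ k ∧ Subgroup.normalClosure Δ = Subgroup.closure (Δ ∪ Ξ) := by
  set N := Subgroup.normalClosure Δ with hN
  set c := Nat.card (Subgroup.closure Δ) with hc
  have hcpos : 0 < c := Nat.card_pos
  have hΔN : Subgroup.closure Δ ≤ N := (Subgroup.closure_le N).mpr Subgroup.subset_normalClosure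
  have hdvd : c ∣ Nat.card N := Subgroup.card_dvd_of_le hΔN
  have hNle : Nat.card N ≤ 2 ^ k * c := by
    obtain ⟨m, hm⟩ := hdvd
    have : Nat.card N / c = m := by rw [hm, Nat.mul_div_cancel_left _ hcpos]
    rw [hm]
    have hm2 : m ≤ 2 ^ k := by rw [← this]; exact hcard
    calc c * m ≤ c * 2 ^ k := Nat.mul_le_mul_left c hm2
      _ = 2 ^ k * c := Nat.mul_comm _ _
  -- Step 1: the chain reaches N at step k
  have hchain : ∀ j : ℕ, KK Sig Δ j = N ∨ 2 ^ j * c ≤ Nat.card (KK Sig Δ j) := by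
    intro j
    induction j with
    | zero =>
      right
      simpa using Subgroup.card_le_of_le (closureΔ_le_KK Sig Δ 0)
    | succ j ih =>
      by_cases hNs : KK Sig Δ (j + 1) = N
      · exact Or.inl hNs
      · right
        have hjN : KK Sig Δ j ≠ N := by
          intro h
          exact hNs (le_antisymm (KK_le_N Sig Δ (j + 1)) (h ▸ KK_mono Sig Δ (Nat.le_succ j)))
        have h2j := ih.resolve_left hjN
        have hne : KK Sig Δ j ≠ KK Sig Δ (j + 1) := fun h => hjN (KK_eq_N_of_stab Sig Δ hgen h)
        have hdbl := two_mul_card_le (KK_mono Sig Δ (Nat.le_succ j)) hne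
        calc 2 ^ (j + 1) * c = 2 * (2 ^ j * c) := by ring
          _ ≤ 2 * Nat.card (KK Sig Δ j) := by omega
          _ ≤ Nat.card (KK Sig Δ (j + 1)) := hdbl
  have hKKtop : KK Sig Δ k = N := by
    rcases hchain k with h | h
    · exact h
    · exact Subgroup.eq_of_le_of_card_ge (KK_le_N Sig Δ k) (hNle.trans h)
  set C := conjSet Sig Δ k with hCdef
  have hCsubN : C ⊆ (N : Set G) := fun x hx => by
    rw [← hKKtop]; exact Subgroup.subset_closure (Or.inr hx)
  -- Step 2: greedy extraction of at most k elements of C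
  have hgreedy : ∀ j : ℕ, ∃ Ξ : Set G, Ξ ⊆ C ∧ Ξ.ncard ≤ j ∧
      (Subgroup.closure (Δ ∪ Ξ) = N ∨ 2 ^ j * c ≤ Nat.card (Subgroup.closure (Δ ∪ Ξ))) := by
    intro j
    induction j with
    | zero =>
      refine ⟨∅, Set.empty_subset _, by simp, Or.inr ?_⟩
      rw [Set.union_empty, pow_zero, one_mul]
    | succ j ih =>
      obtain ⟨Ξ, hΞC, hΞcard, hdisj⟩ := ih
      by_cases heq : Subgroup.closure (Δ ∪ Ξ) = N
      · exact ⟨Ξ, hΞC, hΞcard.trans (Nat.le_succ j), Or.inl heq⟩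
      · have h2j := hdisj.resolve_left heq
        have hsub : Subgroup.closure (Δ ∪ Ξ) ≤ N :=
          (Subgroup.closure_le N).mpr (Set.union_subset Subgroup.subset_normalClosure
            (hΞC.trans hCsubN))
        have hex : ∃ x ∈ C, x ∉ Subgroup.closure (Δ ∪ Ξ) := by
          by_contra hcon
          push_neg at hcon
          apply heq
          apply le_antisymm hsub
          rw [← hKKtop]
          apply (Subgroup.closure_le _).mpr
          rintro y (hy | hy)
          · exact Subgroup.subset_closure (Or.inl hy)
          · exact hcon y hy
        obtain ⟨x, hxC, hxn⟩ := hex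
        refine ⟨insert x Ξ, Set.insert_subset hxC hΞC,
          (Set.ncard_insert_le x Ξ).trans (by omega), Or.inr ?_⟩
        have hle : Subgroup.closure (Δ ∪ Ξ) ≤ Subgroup.closure (Δ ∪ insert x Ξ) :=
          Subgroup.closure_mono (Set.union_subset_union_right Δ (Set.subset_insert x Ξ))
        have hne : Subgroup.closure (Δ ∪ Ξ) ≠ Subgroup.closure (Δ ∪ insert x Ξ) := by
          intro h
          apply hxn
          rw [h]
          exact Subgroup.subset_closure (Or.inr (Set.mem_insert x Ξ))
        have hdbl := two_mul_card_le hle hne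
        calc 2 ^ (j + 1) * c = 2 * (2 ^ j * c) := by ring
          _ ≤ 2 * Nat.card (Subgroup.closure (Δ ∪ Ξ)) := by omega
          _ ≤ _ := hdbl
  obtain ⟨Ξ, hΞC, hΞcard, hdisj⟩ := hgreedy k
  refine ⟨Ξ, hΞC, hΞcard, ?_⟩
  rcases hdisj with h | h
  · exact h.symm
  · have hsub : Subgroup.closure (Δ ∪ Ξ) ≤ N :=
      (Subgroup.closure_le N).mpr (Set.union_subset Subgroup.subset_normalClosure
        (hΞC.trans hCsubN))
    exact (Subgroup.eq_of_le_of_card_ge hsub (hNle.trans h)).symm
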